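/- Let G = (V, E) be a finite connected graph with n vertices, and let ω = (ω(k))_{k≥1} be an i.i.d. sequence of uniform directed edges. Let Dict(ω) denote the almost surely well-defined vertex v such that for every initial configuration η₀ ∈ {0,1}^V the consensus opinion of the voter model driven by (η₀, ω) equals η₀(v). Then for every vertex k ∈ V, P(Dict(ω) = k) = 1/n. -/

import Mathlib

open MeasureTheory ProbabilityTheory
open scoped ENNReal Classical

/-- The voter-model update map. -/
def voterUpd {V : Type*} [DecidableEq V] (e : V × V) (η : V → Bool) : V → Bool :=
  Function.update η e.2 (η e.1)

/-- The discrete-time voter model driven by `η0` and a sequence of directed edges. -/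
def voterProc {V : Type*} [DecidableEq V] (η0 : V → Bool) (ω : ℕ → V × V) : ℕ → V → Bool
  | 0 => η0
  | k + 1 => voterUpd (ω k) (voterProc η0 ω k)

/-- The consensus opinion of the voter model: `true` iff the all-ones configuration is
eventually reached (the all-ones state is absorbing; on a finite connected graph, driven by
i.i.d. uniform edges, some constant configuration is a.s. eventually reached, so this a.s.
coincides with the eventual constant value). -/
noncomputable def consensus {V : Type*} [DecidableEq V]
    (η0 : V → Bool) (ω : ℕ → V × V) : Bool :=
  if ∃ k : ℕ, ∀ v : V, voterProc η0 ω k v = true then true else false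

/-!
Started from the indicator of `k`, the voter model reaches the all-`true` configuration exactly
when `k` is the dictator. Each directed edge is chosen as often as its reverse, so the expected
number of `true` opinions is conserved and stays `1`. By connectivity some fixed word of edges
forces consensus from every configuration; it occurs in each block of its length with a fixed
positive probability, so consensus is reached almost surely. In the limit each vertex is `true`
with the probability of the all-`true` consensus, so that probability is `1 / n`.
-/

open Filter Topology

section Deterministic

variable {V : Type*} [DecidableEq V]

lemma voterUpd_apply (e : V × V) (η : V → Bool) (v : V) :
    voterUpd e η v = η (if v = e.2 then e.1 else v) := by
  by_cases h : v = e.2 <;> simp [voterUpd, h]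

lemma voterProc_congr {η0 : V → Bool} {ω ω' : ℕ → V × V} {t : ℕ}
    (h : ∀ i < t, ω i = ω' i) : voterProc η0 ω t = voterProc η0 ω' t := by
  induction t with
  | zero => rfl
  | succ t ih =>
    simp only [voterProc, h t t.lt_succ_self, ih fun i hi => h i (hi.trans t.lt_succ_self)]

lemma voterProc_add (η0 : V → Bool) (ω : ℕ → V × V) (t s : ℕ) :
    voterProc η0 ω (t + s) = voterProc (voterProc η0 ω t) (fun i => ω (t + i)) s := by
  induction s with
  | zero => rfl
  | succ s ih => exact congrArg (voterUpd (ω (t + s))) ih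

lemma voterProc_comp (f : Bool → Bool) (η0 : V → Bool) (ω : ℕ → V × V) (t : ℕ) :
    voterProc (f ∘ η0) ω t = f ∘ voterProc η0 ω t := by
  induction t with
  | zero => rfl
  | succ t ih => funext v; simp only [voterProc, voterUpd_apply, ih, Function.comp_apply]

lemma voterProc_mono {η0 η1 : V → Bool} (h : η0 ≤ η1) (ω : ℕ → V × V) (t : ℕ) :
    voterProc η0 ω t ≤ voterProc η1 ω t := by
  induction t with
  | zero => exact h
  | succ t ih => intro v; simp only [voterProc, voterUpd_apply]; exact ih _

lemma voterProc_eq_of_le {η0 : V → Bool} {ω : ℕ → V × V} {t s : ℕ} {b : Bool} (hts : t ≤ s)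
    (h : ∀ v, voterProc η0 ω t v = b) (v : V) : voterProc η0 ω s v = b := by
  obtain ⟨d, rfl⟩ := Nat.exists_eq_add_of_le hts
  have hconst : voterProc η0 ω t = (fun _ => b) ∘ voterProc η0 ω t := funext h
  rw [voterProc_add, hconst, voterProc_comp]
  rfl

lemma consensus_eq_of_forall [Nonempty V] {η0 : V → Bool} {ω : ℕ → V × V} {t : ℕ} {b : Bool}
    (h : ∀ v, voterProc η0 ω t v = b) : consensus η0 ω = b := by
  cases b with
  | true => exact if_pos ⟨t, h⟩
  | false =>
    refine if_neg ?_
    rintro ⟨s, hs⟩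
    have v := Classical.arbitrary V
    simpa [voterProc_eq_of_le (le_max_left t s) h v] using
      voterProc_eq_of_le (le_max_right t s) hs v

lemma forall_consensus_eq_iff [Nonempty V] (k : V) (ω : ℕ → V × V) :
    (∀ η0 : V → Bool, consensus η0 ω = η0 k) ↔
      ∃ t, ∀ v, voterProc (fun v => decide (v = k)) ω t v = true := by
  refine ⟨fun h => ?_, fun ⟨t, ht⟩ η0 => consensus_eq_of_forall (t := t) fun v => ?_⟩
  · have hk := h fun v => decide (v = k)
    simp only [consensus, decide_true] at hk
    by_contra hne
    simp [if_neg hne] at hk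
  · -- the agreement indicator `v ↦ (η0 v == η0 k)` dominates the indicator of `k`
    have hle : (fun v => decide (v = k)) ≤ (· == η0 k) ∘ η0 := by
      intro w; by_cases hw : w = k <;> simp [hw]
    have := voterProc_mono hle ω t v
    rw [ht, voterProc_comp] at this
    simpa using this.antisymm (Bool.le_true _)

end Deterministic

section ForcingWord

variable {V : Type*} [DecidableEq V] (G : SimpleGraph V)

def ForcesConsensusOn (s : Finset V) (ℓ : ℕ) (w : ℕ → V × V) : Prop :=
  (∀ i < ℓ, G.Adj (w i).1 (w i).2) ∧ ∀ η : V → Bool, ∃ b, ∀ v ∈ s, voterProc η w ℓ v = b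

variable {G}

lemma forcesConsensusOn_singleton (x : V) : ForcesConsensusOn G {x} 0 fun _ => (x, x) :=
  ⟨by simp, fun η => ⟨η x, by simp [voterProc]⟩⟩

lemma ForcesConsensusOn.insert {s : Finset V} {ℓ : ℕ} {w : ℕ → V × V}
    (hw : ForcesConsensusOn G s ℓ w) {p q : V} (hp : p ∈ s) (hpq : G.Adj p q) :
    ForcesConsensusOn G (insert q s) (ℓ + 1) (Function.update w ℓ (p, q)) := by
  refine ⟨fun i hi => ?_, fun η => ?_⟩
  · rcases eq_or_ne i ℓ with rfl | hne
    · simpa using hpq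
    · simpa [hne] using hw.1 i (by omega)
  · obtain ⟨b, hb⟩ := hw.2 η
    have hprefix : voterProc η (Function.update w ℓ (p, q)) ℓ = voterProc η w ℓ :=
      voterProc_congr fun i hi => Function.update_of_ne hi.ne _ _
    refine ⟨b, fun v hv => ?_⟩
    simp only [voterProc, Function.update_self, hprefix, voterUpd_apply]
    split_ifs with hvq
    · exact hb p hp
    · exact hb v ((Finset.mem_insert.mp hv).resolve_left hvq)

lemma exists_forcesConsensusOn_univ [Fintype V] (hconn : G.Connected) :
    ∃ ℓ w, ForcesConsensusOn G Finset.univ ℓ w := by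
  obtain ⟨x⟩ := hconn.nonempty
  suffices ∀ n (s : Finset V), sᶜ.card = n → x ∈ s → (∃ ℓ w, ForcesConsensusOn G s ℓ w) →
      ∃ ℓ w, ForcesConsensusOn G Finset.univ ℓ w from
    this _ {x} rfl (Finset.mem_singleton_self x) ⟨_, _, forcesConsensusOn_singleton x⟩
  intro n
  induction n with
  | zero =>
    intro s hs _ hw
    rw [Finset.card_eq_zero, Finset.compl_eq_empty_iff] at hs
    exact hs ▸ hw
  | succ n ih =>
    intro s hs hx ⟨ℓ, w, hw⟩
    obtain ⟨y, hy⟩ := Finset.card_pos.mp (by rw [hs]; omega)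
    obtain ⟨d, -, hd, hd'⟩ :=
      (hconn x y).some.exists_boundary_dart s hx (by simpa using Finset.mem_compl.mp hy)
    refine ih (insert d.snd s) ?_ (Finset.mem_insert_of_mem hx) ⟨_, _, hw.insert hd d.adj⟩
    rw [Finset.compl_insert, Finset.card_erase_of_mem (by simpa using hd'), hs]
    rfl

end ForcingWord

section Cylinders

variable {ι : Type*} {α : ι → Type*}

lemma exists_eq_cylinder_of_dependsOn {A : Set (∀ i, α i)} {S : Finset ι}
    (hA : DependsOn (· ∈ A) (S : Set ι)) : ∃ A', A = cylinder S A' := by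
  refine ⟨S.restrict '' A, Set.ext fun x => ⟨fun hx => ⟨x, hx, rfl⟩, ?_⟩⟩
  rintro ⟨y, hy, hyx⟩
  have : y ∈ A ↔ x ∈ A := Iff.of_eq (hA fun i hi => congrFun hyx ⟨i, hi⟩)
  exact this.mp hy

variable [∀ i, MeasurableSpace (α i)] [∀ i, Countable (α i)]
  [∀ i, MeasurableSingletonClass (α i)]

lemma measurableSet_of_dependsOn {A : Set (∀ i, α i)} {S : Finset ι}
    (hA : DependsOn (· ∈ A) (S : Set ι)) : MeasurableSet A := by
  obtain ⟨A', rfl⟩ := exists_eq_cylinder_of_dependsOn hA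
  exact MeasurableSet.cylinder S A'.to_countable.measurableSet

lemma measure_inter_eq_mul_of_dependsOn {μ : Measure (∀ i, α i)}
    (hindep : iIndepFun (fun i ω => ω i) μ) {S T : Finset ι} (hST : Disjoint S T)
    {A B : Set (∀ i, α i)} (hA : DependsOn (· ∈ A) (S : Set ι))
    (hB : DependsOn (· ∈ B) (T : Set ι)) : μ (A ∩ B) = μ A * μ B := by
  obtain ⟨A', rfl⟩ := exists_eq_cylinder_of_dependsOn hA
  obtain ⟨B', rfl⟩ := exists_eq_cylinder_of_dependsOn hB
  exact (hindep.indepFun_finset S T hST measurable_pi_apply).measure_inter_preimage_eq_mul _ _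
    A'.to_countable.measurableSet B'.to_countable.measurableSet

end Cylinders

lemma Fintype.sum_ite_eq_add {V M : Type*} [Fintype V] [DecidableEq V] [AddCommMonoid M]
    (f : V → M) (x y : V) :
    ∑ v, f (if v = y then x else v) + f y = ∑ v, f v + f x := by
  have hcompl : ∀ v ∈ ({y}ᶜ : Finset V), f (if v = y then x else v) = f v := fun v hv => by
    rw [if_neg (Finset.mem_compl.mp hv ∘ Finset.mem_singleton.mpr)]
  rw [Fintype.sum_eq_add_sum_compl y, Fintype.sum_eq_add_sum_compl y f, if_pos rfl,
    Finset.sum_congr rfl hcompl]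
  abel

abbrev DirectedEdge {V : Type*} (G : SimpleGraph V) : Type _ := {e : V × V // G.Adj e.1 e.2}

section VoterProbability

variable {V : Type*} [DecidableEq V] {G : SimpleGraph V}

lemma dependsOn_voterProc (P : (V → Bool) → Prop) (η0 : V → Bool) (t : ℕ) :
    DependsOn (fun ω : ℕ → DirectedEdge G => P (voterProc η0 (fun i => (ω i).1) t))
      (Finset.range t : Set ℕ) := fun ω ω' h => by
  dsimp only
  rw [voterProc_congr fun i hi => congrArg Subtype.val (h i (by simpa using hi))]

variable [Fintype V] [MeasurableSpace V] [MeasurableSingletonClass V]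
  {μ : Measure (ℕ → DirectedEdge G)} {c : ℝ≥0∞}
variable (hindep : iIndepFun (fun i (ω : ℕ → DirectedEdge G) => ω i) μ)
  (hunif : ∀ i e, μ {ω | ω i = e} = c)
include hindep hunif

lemma measure_voterProc_succ_apply (η0 : V → Bool) (t : ℕ) (v : V) :
    μ {ω | voterProc η0 (fun i => (ω i).1) (t + 1) v = true} =
      c * ∑ e : DirectedEdge G,
        μ {ω | voterProc η0 (fun i => (ω i).1) t (if v = e.1.2 then e.1.1 else v) = true} := by
  have hsplit : {ω | voterProc η0 (fun i => (ω i).1) (t + 1) v = true} =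
      ⋃ e : DirectedEdge G, {ω : ℕ → DirectedEdge G | ω t = e} ∩
        {ω | voterProc η0 (fun i => (ω i).1) t (if v = e.1.2 then e.1.1 else v) = true} := by
    ext ω
    simp [voterProc, voterUpd_apply]
  have hcoord (e : DirectedEdge G) :
      DependsOn (· ∈ {ω : ℕ → DirectedEdge G | ω t = e}) ({t} : Finset ℕ) :=
    fun ω ω' h => by simp [h t (Finset.mem_singleton_self t)]
  have hstate (u : V) : DependsOn
      (· ∈ {ω : ℕ → DirectedEdge G | voterProc η0 (fun i => (ω i).1) t u = true})
      (Finset.range t : Set ℕ) :=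
    dependsOn_voterProc (· u = true) η0 t
  rw [hsplit, measure_iUnion, tsum_fintype, Finset.mul_sum]
  · refine Finset.sum_congr rfl fun e _ => ?_
    rw [measure_inter_eq_mul_of_dependsOn hindep (by simp) (hcoord e) (hstate _), hunif]
  · intro e e' hne
    exact Set.disjoint_left.mpr fun ω h h' => hne (h.1.symm.trans h'.1)
  · exact fun e => (measurableSet_of_dependsOn (hcoord e)).inter
      (measurableSet_of_dependsOn (hstate _))

lemma sum_measure_voterProc_succ (η0 : V → Bool) (t : ℕ) :
    ∑ v, μ {ω | voterProc η0 (fun i => (ω i).1) (t + 1) v = true} =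
      ∑ v, μ {ω | voterProc η0 (fun i => (ω i).1) t v = true} := by
  have := hindep.isProbabilityMeasure
  set p : V → ℝ≥0∞ := fun v => μ {ω | voterProc η0 (fun i => (ω i).1) t v = true}
  have hc : ∑ _e : DirectedEdge G, c = 1 := by
    calc ∑ _e : DirectedEdge G, c = ∑ e, μ ((fun ω => ω 0) ⁻¹' {e}) :=
          Finset.sum_congr rfl fun e _ => (hunif 0 e).symm
      _ = 1 := by
        rw [sum_measure_preimage_singleton (f := fun ω : ℕ → DirectedEdge G => ω 0) _
          fun e _ => measurable_pi_apply 0 (measurableSet_singleton e)]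
        simp
  have hreverse : ∑ e : DirectedEdge G, c * p e.1.2 = ∑ e : DirectedEdge G, c * p e.1.1 :=
    Fintype.sum_equiv (Equiv.subtypeEquiv (Equiv.prodComm V V) fun e => G.adj_comm _ _) _ _
      fun _ => rfl
  have hfinite : ∑ e : DirectedEdge G, c * p e.1.2 ≠ ∞ :=
    ENNReal.sum_ne_top.mpr fun e _ =>
      ENNReal.mul_ne_top (hunif 0 e ▸ measure_ne_top μ _) (measure_ne_top μ _)
  refine (ENNReal.add_left_inj hfinite).mp ?_
  calc ∑ v, μ {ω | voterProc η0 (fun i => (ω i).1) (t + 1) v = true} +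
        ∑ e : DirectedEdge G, c * p e.1.2
      = ∑ e : DirectedEdge G, c * (∑ v, p (if v = e.1.2 then e.1.1 else v) + p e.1.2) := by
        simp only [measure_voterProc_succ_apply hindep hunif, mul_add, Finset.sum_add_distrib,
          Finset.mul_sum]
        rw [Finset.sum_comm]
    _ = ∑ e : DirectedEdge G, c * (∑ v, p v + p e.1.1) := by
        simp only [Fintype.sum_ite_eq_add]
    _ = (∑ _e : DirectedEdge G, c) * ∑ v, p v + ∑ e : DirectedEdge G, c * p e.1.1 := by
        rw [Finset.sum_mul, ← Finset.sum_add_distrib]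
        simp only [mul_add]
    _ = ∑ v, p v + ∑ e : DirectedEdge G, c * p e.1.2 := by
        rw [hc, one_mul, hreverse]

lemma sum_measure_voterProc (η0 : V → Bool) (t : ℕ) :
    ∑ v, μ {ω | voterProc η0 (fun i => (ω i).1) t v = true} =
      (Finset.univ.filter (η0 · = true)).card := by
  have := hindep.isProbabilityMeasure
  induction t with
  | zero =>
    rw [Finset.natCast_card_filter]
    refine Finset.sum_congr rfl fun v _ => ?_
    by_cases hv : η0 v = true <;> simp [voterProc, hv]
  | succ t ih => rw [sum_measure_voterProc_succ hindep hunif, ih]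

omit [DecidableEq V] in
lemma measure_forall_lt_apply_add_eq {ℓ : ℕ} {w : ℕ → V × V}
    (hw : ∀ i < ℓ, G.Adj (w i).1 (w i).2) (T : ℕ) :
    μ {ω | ∀ i < ℓ, (ω (T + i)).1 = w i} = c ^ ℓ := by
  have hset : {ω : ℕ → DirectedEdge G | ∀ i < ℓ, (ω (T + i)).1 = w i} =
      ⋂ i ∈ Finset.range ℓ, (fun ω => ω (T + i)) ⁻¹' {e | e.1 = w i} := by
    ext ω; simp
  have hfactor : ∀ i ∈ Finset.range ℓ, μ ((fun ω => ω (T + i)) ⁻¹' {e | e.1 = w i}) = c :=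
    fun i hi => by
      rw [← hunif (T + i) ⟨w i, hw i (Finset.mem_range.mp hi)⟩]
      congr 1; ext ω; simp [Subtype.ext_iff]
  rw [hset, (hindep.precomp (add_right_injective T)).measure_inter_preimage_eq_mul _
    fun _ _ => (Set.to_countable _).measurableSet, Finset.prod_congr rfl hfactor,
    Finset.prod_const, Finset.card_range]

lemma measure_not_consensus_add_le {ℓ : ℕ} {w : ℕ → V × V}
    (hw : ForcesConsensusOn G Finset.univ ℓ w) (η0 : V → Bool) (T : ℕ) :
    μ {ω | ¬ ∃ b, ∀ v, voterProc η0 (fun i => (ω i).1) (T + ℓ) v = b} ≤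
      μ {ω | ¬ ∃ b, ∀ v, voterProc η0 (fun i => (ω i).1) T v = b} * (1 - c ^ ℓ) := by
  have := hindep.isProbabilityMeasure
  set B := {ω : ℕ → DirectedEdge G | ∀ i < ℓ, (ω (T + i)).1 = w i}
  have hB : DependsOn (· ∈ B) (Finset.Ico T (T + ℓ) : Set ℕ) := fun ω ω' h => by
    have hi (i : ℕ) (hi : i < ℓ) : ω (T + i) = ω' (T + i) := h _ (by simp [hi])
    exact propext (forall₂_congr fun i hi' => by rw [hi i hi'])
  have hBc : DependsOn (· ∈ Bᶜ) (Finset.Ico T (T + ℓ) : Set ℕ) :=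
    fun ω ω' h => congrArg Not (hB h)
  have hdisj : Disjoint (Finset.range T) (Finset.Ico T (T + ℓ)) :=
    Finset.range_eq_Ico T ▸ Finset.Ico_disjoint_Ico_consecutive 0 T _
  have hforced : ∀ ω ∈ B, ∃ b, ∀ v, voterProc η0 (fun i => (ω i).1) (T + ℓ) v = b := by
    intro ω hω
    obtain ⟨b, hb⟩ := hw.2 (voterProc η0 (fun i => (ω i).1) T)
    refine ⟨b, fun v => ?_⟩
    rw [voterProc_add, voterProc_congr hω]
    exact hb v (Finset.mem_univ v)
  calc _ ≤ μ ({ω | ¬ ∃ b, ∀ v, voterProc η0 (fun i => (ω i).1) T v = b} ∩ Bᶜ) :=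
        measure_mono fun ω h => ⟨fun ⟨b, hb⟩ => absurd ⟨b, voterProc_eq_of_le (by omega) hb⟩ h,
          fun hωB => absurd (hforced ω hωB) h⟩
    _ = μ {ω | ¬ ∃ b, ∀ v, voterProc η0 (fun i => (ω i).1) T v = b} * μ Bᶜ :=
        measure_inter_eq_mul_of_dependsOn hindep hdisj
          (dependsOn_voterProc (fun η => ¬ ∃ b, ∀ v, η v = b) η0 T) hBc
    _ = _ := by
        rw [prob_compl_eq_one_sub (measurableSet_of_dependsOn hB),
          measure_forall_lt_apply_add_eq hindep hunif hw.1]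

lemma measure_not_consensus_mul_le {ℓ : ℕ} {w : ℕ → V × V}
    (hw : ForcesConsensusOn G Finset.univ ℓ w) (η0 : V → Bool) (j : ℕ) :
    μ {ω | ¬ ∃ b, ∀ v, voterProc η0 (fun i => (ω i).1) (j * ℓ) v = b} ≤ (1 - c ^ ℓ) ^ j := by
  have := hindep.isProbabilityMeasure
  induction j with
  | zero => simpa using prob_le_one
  | succ j ih =>
    rw [Nat.succ_mul, pow_succ]
    exact (measure_not_consensus_add_le hindep hunif hw η0 _).trans (mul_le_mul_left ih _)

lemma tendsto_measure_not_consensus (hconn : G.Connected) (hc : c ≠ 0) (η0 : V → Bool) :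
    Tendsto (fun t => μ {ω | ¬ ∃ b, ∀ v, voterProc η0 (fun i => (ω i).1) t v = b}) atTop (𝓝 0) := by
  have := hindep.isProbabilityMeasure
  obtain ⟨ℓ, w, hw⟩ := exists_forcesConsensusOn_univ hconn
  set N : ℕ → Set (ℕ → DirectedEdge G) :=
    fun t => {ω | ¬ ∃ b, ∀ v, voterProc η0 (fun i => (ω i).1) t v = b}
  have hanti : Antitone N := fun s t hst ω h ⟨b, hb⟩ => h ⟨b, voterProc_eq_of_le hst hb⟩
  have hmeas (t : ℕ) : NullMeasurableSet (N t) μ :=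
    (measurableSet_of_dependsOn
      (dependsOn_voterProc (fun η => ¬ ∃ b, ∀ v, η v = b) η0 t)).nullMeasurableSet
  have hgeom : Tendsto (fun j : ℕ => (1 - c ^ ℓ) ^ j) atTop (𝓝 0) :=
    ENNReal.tendsto_pow_atTop_nhds_zero_of_lt_one
      (ENNReal.sub_lt_self ENNReal.one_ne_top one_ne_zero (pow_ne_zero _ hc))
  have hnull : μ (⋂ t, N t) = 0 := le_antisymm (ge_of_tendsto' hgeom fun j =>
    (measure_mono (Set.iInter_subset _ _)).trans
      (measure_not_consensus_mul_le hindep hunif hw η0 j)) bot_le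
  exact hnull ▸ tendsto_measure_iInter_atTop hmeas hanti ⟨0, measure_ne_top μ _⟩

lemma natCast_card_mul_measure_exists_voterProc_eq_true (hconn : G.Connected) (hc : c ≠ 0)
    (η0 : V → Bool) :
    Fintype.card V * μ {ω | ∃ t, ∀ v, voterProc η0 (fun i => (ω i).1) t v = true} =
      (Finset.univ.filter (η0 · = true)).card := by
  set A : ℕ → Set (ℕ → DirectedEdge G) :=
    fun t => {ω | ∀ v, voterProc η0 (fun i => (ω i).1) t v = true}
  set N : ℕ → Set (ℕ → DirectedEdge G) :=
    fun t => {ω | ¬ ∃ b, ∀ v, voterProc η0 (fun i => (ω i).1) t v = b}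
  have hA : Tendsto (fun t => μ (A t)) atTop (𝓝 (μ (⋃ t, A t))) :=
    tendsto_measure_iUnion_atTop fun s t hst ω h => voterProc_eq_of_le hst h
  have hn : (Fintype.card V : ℝ≥0∞) ≠ ∞ := ENNReal.natCast_ne_top _
  have hupper (t : ℕ) : Fintype.card V * μ (A t) ≤ (Finset.univ.filter (η0 · = true)).card := by
    rw [← sum_measure_voterProc hindep hunif η0 t, ← nsmul_eq_mul, ← Finset.card_univ,
      ← Finset.sum_const]
    exact Finset.sum_le_sum fun v _ => measure_mono fun ω h => h v
  have hlower (t : ℕ) : (Finset.univ.filter (η0 · = true)).card ≤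
      Fintype.card V * μ (A t) + Fintype.card V * μ (N t) := by
    rw [← sum_measure_voterProc hindep hunif η0 t, ← mul_add, ← nsmul_eq_mul, ← Finset.card_univ,
      ← Finset.sum_const]
    refine Finset.sum_le_sum fun v _ => (measure_mono fun ω h => ?_).trans (measure_union_le _ _)
    by_cases hcons : ∃ b, ∀ w, voterProc η0 (fun i => (ω i).1) t w = b
    · obtain ⟨b, hb⟩ := hcons
      exact Or.inl fun w => (hb w).trans ((hb v).symm.trans h)
    · exact Or.inr hcons
  have hlim : Tendsto (fun t => Fintype.card V * μ (A t) + Fintype.card V * μ (N t)) atTop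
      (𝓝 (Fintype.card V * μ (⋃ t, A t))) := by
    simpa only [mul_zero, add_zero] using (ENNReal.Tendsto.const_mul hA (Or.inr hn)).add
      (ENNReal.Tendsto.const_mul (tendsto_measure_not_consensus hindep hunif hconn hc η0)
        (Or.inr hn))
  rw [Set.ofPred_exists]
  exact le_antisymm (le_of_tendsto' (ENNReal.Tendsto.const_mul hA (Or.inr hn)) hupper)
    (ge_of_tendsto' hlim hlower)

end VoterProbability

theorem stmt11_general {V : Type*} [Fintype V] [DecidableEq V]
    [MeasurableSpace V] [MeasurableSingletonClass V]
    (G : SimpleGraph V) [DecidableRel G.Adj] (hconn : G.Connected)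
    (μω : Measure (ℕ → {e : V × V // G.Adj e.1 e.2}))
    (hindep : iIndepFun (fun k ω => ω k) μω)
    (hunif : ∀ (k : ℕ) (e : {e : V × V // G.Adj e.1 e.2}),
      μω {ω | ω k = e} = (2 * G.edgeFinset.card : ℝ≥0∞)⁻¹) :
    ∀ k : V,
      μω {ω | ∀ η0 : V → Bool, consensus η0 (fun i => ((ω i : V × V))) = η0 k}
        = (Fintype.card V : ℝ≥0∞)⁻¹ := by
  intro k
  have : Nonempty V := hconn.nonempty
  have hc : (2 * G.edgeFinset.card : ℝ≥0∞)⁻¹ ≠ 0 := ENNReal.inv_ne_zero.mpr (by finiteness)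
  have hdict := natCast_card_mul_measure_exists_voterProc_eq_true hindep hunif hconn hc
    fun v => decide (v = k)
  simp only [decide_eq_true_eq, Finset.filter_eq', Finset.mem_univ, if_true,
    Finset.card_singleton, Nat.cast_one] at hdict
  simp_rw [forall_consensus_eq_iff k]
  exact ENNReal.eq_inv_of_mul_eq_one_left ((mul_comm _ _).trans hdict)

/-- For a finite connected graph with `n` vertices and i.i.d. uniform edge
selections, each vertex `k` is the dictator (the a.s. well-defined vertex whose initial
opinion always becomes the consensus) with probability `1/n`. -/
theorem stmt11 {V : Type*} [Fintype V] [DecidableEq V]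
    [MeasurableSpace V] [MeasurableSingletonClass V]
    (G : SimpleGraph V) [DecidableRel G.Adj] (hconn : G.Connected)
    (μω : Measure (ℕ → {e : V × V // G.Adj e.1 e.2})) [IsProbabilityMeasure μω]
    (hindep : iIndepFun (fun k ω => ω k) μω)
    (hunif : ∀ (k : ℕ) (e : {e : V × V // G.Adj e.1 e.2}),
      μω {ω | ω k = e} = (2 * G.edgeFinset.card : ℝ≥0∞)⁻¹) :
    ∀ k : V,
      μω {ω | ∀ η0 : V → Bool, consensus η0 (fun i => ((ω i : V × V))) = η0 k}
        = (Fintype.card V : ℝ≥0∞)⁻¹ :=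
  stmt11_general G hconn μω hindep hunif
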